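/- The Markovian Langlie chain is irreducible with respect to Lebesgue measure on [0,1]: for every x ∈ [0,1] and every Borel set A ⊆ [0,1] of positive Lebesgue measure, there exists n ≥ 1 such that kⁿ(x, A) > 0. -/

import Mathlib

open MeasureTheory

/-- The Markovian Langlie transition kernel on `[0,1]`:
`k(x,·) = H_x · Unif[x/2, x/2+ε] + (1−H_x) · Unif[(x+1)/2−ε, (x+1)/2]`. -/
noncomputable def langlieKernel (H : ℝ → ℝ) (ε : ℝ) (x : ℝ) : Measure ℝ :=
  ENNReal.ofReal (H x) •
      ((ENNReal.ofReal ε)⁻¹ • volume.restrict (Set.Icc (x / 2) (x / 2 + ε))) +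
  ENNReal.ofReal (1 - H x) •
      ((ENNReal.ofReal ε)⁻¹ • volume.restrict (Set.Icc ((x + 1) / 2 - ε) ((x + 1) / 2)))

/-- The `n`-step kernel: `kⁿ⁺¹(x,·)` is obtained by first moving according to `k(x,·)`
and then running `kⁿ`; `k⁰(x,·) = δ_x`. -/
noncomputable def langlieIter (H : ℝ → ℝ) (ε : ℝ) : ℕ → ℝ → Measure ℝ
  | 0 => fun x => Measure.dirac x
  | n + 1 => fun x => (langlieKernel H ε x).bind (langlieIter H ε n)

/-
Only positivity matters, so we track absolute continuity rather than densities. From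
`y ∈ [0,1]`, Lebesgue measure on `[y/2, y/2 + ε]` and on `[(y+1)/2 - ε, (y+1)/2]` is absolutely
continuous w.r.t. `k(y,·)`. If Lebesgue measure on each window `(z/2ⁿ + a, z/2ⁿ + a + L)` is
absolutely continuous w.r.t. `kⁿ(z,·)`, then averaging over a start `z` spread over `(p, p + ε)`
gives the same for the window `(p/2ⁿ + a, (p + ε)/2ⁿ + a + L)`: a set meeting almost every
window in a null set meets their union in a null set, since countably many windows with good
parameters already cover that union (Lindelöf). By induction, Lebesgue measure on each of the
`2ⁿ` windows `((y + k(1-2ε))/2ⁿ, (y + k(1-2ε))/2ⁿ + 2ε(1 - 2⁻ⁿ))` is absolutely continuous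
w.r.t. `kⁿ(y,·)`. Once `2ⁿ · 2ε > 1` consecutive windows overlap and together cover
`(y/2ⁿ, 1 - (1-y)/2ⁿ) ⊇ (2⁻ⁿ, 1 - 2⁻ⁿ)`, and these intervals exhaust `(0,1)`.
-/

open Set Filter

lemma measurable_restrict_Icc {α : Type*} [MeasurableSpace α] {μ : Measure ℝ} [SFinite μ]
    {f g : α → ℝ} (hf : Measurable f) (hg : Measurable g) :
    Measurable fun x => μ.restrict (Icc (f x) (g x)) := by
  refine Measure.measurable_of_measurable_coe _ fun s hs => ?_
  simp_rw [Measure.restrict_apply hs]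
  exact measurable_measure_prodMk_left (s := {p : α × ℝ | p.2 ∈ s ∧ f p.1 ≤ p.2 ∧ p.2 ≤ g p.1})
    ((hs.preimage measurable_snd).inter
      ((measurableSet_le (hf.comp measurable_fst) measurable_snd).inter
        (measurableSet_le measurable_snd (hg.comp measurable_fst))))

lemma measurable_langlieKernel {H : ℝ → ℝ} (hH : Measurable H) (ε : ℝ) :
    Measurable (langlieKernel H ε) := by
  refine Measure.measurable_of_measurable_coe _ fun s hs => ?_
  simp only [langlieKernel, Measure.add_apply, Measure.smul_apply, smul_eq_mul]
  have hleft := (Measure.measurable_coe hs).comp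
    (measurable_restrict_Icc (μ := volume) (f := fun x : ℝ => x / 2) (g := fun x => x / 2 + ε)
      (by fun_prop) (by fun_prop))
  have hright := (Measure.measurable_coe hs).comp
    (measurable_restrict_Icc (μ := volume) (f := fun x : ℝ => (x + 1) / 2 - ε)
      (g := fun x => (x + 1) / 2) (by fun_prop) (by fun_prop))
  exact ((ENNReal.measurable_ofReal.comp hH).mul (hleft.const_mul _)).add
    ((ENNReal.measurable_ofReal.comp (measurable_const.sub hH)).mul (hright.const_mul _))

lemma measurable_langlieIter {H : ℝ → ℝ} (hH : Measurable H) (ε : ℝ) (n : ℕ) :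
    Measurable (langlieIter H ε n) := by
  induction n with
  | zero => exact Measure.measurable_dirac
  | succ n ih => exact (Measure.measurable_bind' ih).comp (measurable_langlieKernel hH ε)

lemma ae_mem_Icc_langlieKernel (H : ℝ → ℝ) {ε y : ℝ} (hε : ε ≤ 1 / 2) (hy : y ∈ Icc (0 : ℝ) 1) :
    ∀ᵐ z ∂langlieKernel H ε y, z ∈ Icc (0 : ℝ) 1 := by
  obtain ⟨hy0, hy1⟩ := hy
  simp only [langlieKernel, ae_add_measure_iff]
  refine ⟨Measure.ae_smul_measure (Measure.ae_smul_measure ?_ _) _,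
    Measure.ae_smul_measure (Measure.ae_smul_measure ?_ _) _⟩ <;>
  · refine ae_restrict_of_forall_mem measurableSet_Icc fun z hz => ?_
    constructor <;> linarith [hz.1, hz.2]

lemma langlieIter_congr {H H' : ℝ → ℝ} {ε : ℝ} (hε : ε ≤ 1 / 2) (hHH' : EqOn H H' (Icc 0 1))
    (n : ℕ) : EqOn (langlieIter H ε n) (langlieIter H' ε n) (Icc 0 1) := by
  induction n with
  | zero => exact fun _ _ => rfl
  | succ n ih =>
    intro y hy
    have hkernel : langlieKernel H ε y = langlieKernel H' ε y := by
      rw [langlieKernel, langlieKernel, hHH' hy]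
    change (langlieKernel H ε y).bind _ = (langlieKernel H' ε y).bind _
    rw [hkernel]
    exact Measure.bind_congr_right ((ae_mem_Icc_langlieKernel H' hε hy).mono fun z hz => ih hz)

lemma measure_inter_Ioo_eq_zero_of_ae {A : Set ℝ} {p w a c L : ℝ} (hw : 0 < w) (hc : 0 < c)
    (hL : 0 < L)
    (h : ∀ᵐ z ∂volume.restrict (Ioo p (p + w)), volume (A ∩ Ioo (c * z + a) (c * z + a + L)) = 0) :
    volume (A ∩ Ioo (c * p + a) (c * p + a + (c * w + L))) = 0 := by
  set G := {z | z ∈ Ioo p (p + w) ∧ volume (A ∩ Ioo (c * z + a) (c * z + a + L)) = 0}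
  have hcover : Ioo (c * p + a) (c * p + a + (c * w + L))
      ⊆ ⋃ z ∈ G, Ioo (c * z + a) (c * z + a + L) := by
    intro u ⟨hu₁, hu₂⟩
    -- the a.e.-good parameters are dense, so one of them has `u` in its window
    have hpos : volume (Ioo p (p + w) ∩ Ioo ((u - a - L) / c) ((u - a) / c)) ≠ 0 := by
      rw [Ioo_inter_Ioo, Real.volume_Ioo, ENNReal.ofReal_ne_zero_iff, sub_pos, lt_min_iff,
        max_lt_iff, max_lt_iff, lt_div_iff₀ hc, div_lt_iff₀ hc, div_lt_div_iff_of_pos_right hc]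
      refine ⟨⟨by linarith, by linarith⟩, by linarith, by linarith⟩
    obtain ⟨z, ⟨hzI, hz₁, hz₂⟩, hzA⟩ := Measure.exists_mem_of_measure_ne_zero_of_ae hpos
      (ae_restrict_of_ae_restrict_of_subset inter_subset_left
        (h.and (ae_restrict_mem measurableSet_Ioo)))
    rw [div_lt_iff₀ hc] at hz₁
    rw [lt_div_iff₀ hc] at hz₂
    exact mem_biUnion ⟨hzA.2, hzA.1⟩ ⟨by linarith, by linarith⟩
  obtain ⟨T, hTG, hT, hTU⟩ := TopologicalSpace.isOpen_biUnion_countable G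
    (fun z => Ioo (c * z + a) (c * z + a + L)) fun _ _ => isOpen_Ioo
  refine measure_mono_null (inter_subset_inter_right A (hcover.trans hTU.ge)) ?_
  rw [inter_iUnion₂]
  exact (measure_biUnion_null_iff hT).2 fun z hz => (hTG hz).2

lemma restrict_Ioo_absolutelyContinuous_bind {μ : Measure ℝ} {κ : ℝ → Measure ℝ}
    (hκ : AEMeasurable κ μ) {p w a c L : ℝ} (hw : 0 < w) (hc : 0 < c) (hL : 0 < L)
    (hμ : volume.restrict (Ioo p (p + w)) ≪ μ)
    (hκz : ∀ z ∈ Ioo p (p + w), volume.restrict (Ioo (c * z + a) (c * z + a + L)) ≪ κ z) :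
    volume.restrict (Ioo (c * p + a) (c * p + a + (c * w + L))) ≪ μ.bind κ := by
  refine Measure.AbsolutelyContinuous.mk fun A hA hA0 => ?_
  rw [Measure.bind_apply hA hκ] at hA0
  have hκA : (fun z => κ z A) =ᵐ[μ] 0 :=
    (lintegral_eq_zero_iff' ((Measure.measurable_coe hA).comp_aemeasurable hκ)).1 hA0
  rw [Measure.restrict_apply hA]
  refine measure_inter_Ioo_eq_zero_of_ae hw hc hL ?_
  filter_upwards [hμ.ae_le hκA, ae_restrict_mem measurableSet_Ioo] with z hz hzI
  rw [← Measure.restrict_apply hA]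
  exact hκz z hzI hz

lemma restrict_Icc_absolutelyContinuous_langlieKernel {H : ℝ → ℝ} {ε y : ℝ}
    (hy : H y ∈ Ioo 0 1) {b : ℕ} (hb : b < 2) :
    volume.restrict (Icc (y / 2 + b * ((1 - 2 * ε) / 2)) (y / 2 + b * ((1 - 2 * ε) / 2) + ε))
      ≪ langlieKernel H ε y := by
  have hε : (ENNReal.ofReal ε)⁻¹ ≠ 0 := ENNReal.inv_ne_zero.2 ENNReal.ofReal_ne_top
  interval_cases b
  · simp only [Nat.cast_zero, zero_mul, add_zero]
    exact ((Measure.absolutelyContinuous_smul hε).smul_right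
      (ENNReal.ofReal_pos.2 hy.1).ne').add_right _
  · rw [show y / 2 + ((1 : ℕ) : ℝ) * ((1 - 2 * ε) / 2) = (y + 1) / 2 - ε by push_cast; ring,
      sub_add_cancel]
    exact ((Measure.absolutelyContinuous_smul hε).smul_right
      (ENNReal.ofReal_pos.2 (sub_pos.2 hy.2)).ne').add_right' _

lemma Icc_branch_subset_Icc {ε y : ℝ} (hε : ε ≤ 1 / 2) (hy : y ∈ Icc (0 : ℝ) 1) {b : ℕ}
    (hb : b < 2) :
    Icc (y / 2 + b * ((1 - 2 * ε) / 2)) (y / 2 + b * ((1 - 2 * ε) / 2) + ε) ⊆ Icc 0 1 := by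
  have hb₁ : (b : ℝ) ≤ 1 := by exact_mod_cast Nat.le_of_lt_succ hb
  rintro z ⟨hz₁, hz₂⟩
  constructor <;> nlinarith [hy.1, hy.2]

-- The `n`-step chain from `y` whose branches are the binary digits of `k` (first step = lowest
-- digit) spreads over this window; its length is `ε (1 + 1/2 + ⋯ + 2^(1-n))`.
def langlieWindow (ε : ℝ) (n k : ℕ) (y : ℝ) : Set ℝ :=
  Ioo (y / 2 ^ n + k * ((1 - 2 * ε) / 2 ^ n))
    (y / 2 ^ n + k * ((1 - 2 * ε) / 2 ^ n) + 2 * ε * (1 - 1 / 2 ^ n))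

lemma measurableSet_langlieWindow (ε : ℝ) (n k : ℕ) (y : ℝ) :
    MeasurableSet (langlieWindow ε n k y) :=
  measurableSet_Ioo

lemma restrict_langlieWindow_absolutelyContinuous {H : ℝ → ℝ} {ε : ℝ} (hHm : Measurable H)
    (hH : ∀ y ∈ Icc (0 : ℝ) 1, H y ∈ Ioo 0 1) (hε : 0 < ε) (hε' : ε ≤ 1 / 2) {n : ℕ}
    (hn : 1 ≤ n) {k : ℕ} (hk : k < 2 ^ n) {y : ℝ} (hy : y ∈ Icc (0 : ℝ) 1) :
    volume.restrict (langlieWindow ε n k y) ≪ langlieIter H ε n y := by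
  induction n, hn using Nat.le_induction generalizing k y with
  | base =>
    have hstep : langlieIter H ε 1 y = langlieKernel H ε y := Measure.bind_dirac
    have hwin : langlieWindow ε 1 k y
        = Ioo (y / 2 + k * ((1 - 2 * ε) / 2)) (y / 2 + k * ((1 - 2 * ε) / 2) + ε) := by
      rw [langlieWindow]; ring_nf
    rw [hstep, hwin]
    exact (Measure.restrict_mono Ioo_subset_Icc_self le_rfl).absolutelyContinuous.trans
      (restrict_Icc_absolutelyContinuous_langlieKernel (hH y hy) hk)
  | succ n hn ih =>
    have hk₂ : k / 2 < 2 ^ n := by rw [pow_succ] at hk; omega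
    have hb : k % 2 < 2 := Nat.mod_lt _ two_pos
    have hL : 0 < 2 * ε * (1 - 1 / 2 ^ n) := by
      have : 1 / (2 : ℝ) ^ n < 1 :=
        (div_lt_one (by positivity)).2 (one_lt_pow₀ one_lt_two (by omega))
      nlinarith
    have hfirst := (Measure.restrict_mono Ioo_subset_Icc_self le_rfl).absolutelyContinuous.trans
      (restrict_Icc_absolutelyContinuous_langlieKernel (ε := ε) (hH y hy) hb)
    have hrest : ∀ z ∈ Ioo (y / 2 + (k % 2 : ℕ) * ((1 - 2 * ε) / 2))
        (y / 2 + (k % 2 : ℕ) * ((1 - 2 * ε) / 2) + ε),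
        volume.restrict (Ioo (1 / 2 ^ n * z + (k / 2 : ℕ) * ((1 - 2 * ε) / 2 ^ n))
          (1 / 2 ^ n * z + (k / 2 : ℕ) * ((1 - 2 * ε) / 2 ^ n) + 2 * ε * (1 - 1 / 2 ^ n)))
        ≪ langlieIter H ε n z := by
      intro z hz
      convert ih hk₂ (Icc_branch_subset_Icc hε' hy hb (Ioo_subset_Icc_self hz)) using 2
      rw [langlieWindow]; congr 1 <;> ring
    have hkr : (k : ℝ) = 2 * (k / 2 : ℕ) + (k % 2 : ℕ) := by
      exact_mod_cast (Nat.div_add_mod k 2).symm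
    have hwin : langlieWindow ε (n + 1) k y = Ioo
        (1 / 2 ^ n * (y / 2 + (k % 2 : ℕ) * ((1 - 2 * ε) / 2))
          + (k / 2 : ℕ) * ((1 - 2 * ε) / 2 ^ n))
        (1 / 2 ^ n * (y / 2 + (k % 2 : ℕ) * ((1 - 2 * ε) / 2))
          + (k / 2 : ℕ) * ((1 - 2 * ε) / 2 ^ n) + (1 / 2 ^ n * ε + 2 * ε * (1 - 1 / 2 ^ n))) := by
      rw [langlieWindow, hkr, pow_succ]
      congr 1 <;> field_simp <;> ring
    rw [hwin]
    exact restrict_Ioo_absolutelyContinuous_bind (measurable_langlieIter hHm ε n).aemeasurable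
      hε (by positivity) hL hfirst hrest

lemma Ioo_subset_biUnion_Ioo_add_mul {a d L : ℝ} (hdL : d < L) (N : ℕ) :
    Ioo a (a + N * d + L) ⊆ ⋃ k ≤ N, Ioo (a + k * d) (a + k * d + L) := by
  classical
  rintro u ⟨hau, hu⟩
  set k := Nat.findGreatest (fun k : ℕ => a + k * d < u) N
  have hk : a + k * d < u :=
    Nat.findGreatest_spec (P := fun k : ℕ => a + k * d < u) (Nat.zero_le N) (by simpa using hau)
  have hkN : k ≤ N := Nat.findGreatest_le N
  refine mem_iUnion₂.2 ⟨k, hkN, hk, ?_⟩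
  rcases hkN.lt_or_eq with hkN | hkN
  · have hnext := Nat.findGreatest_is_greatest (Nat.lt_succ_self k) hkN
    push_cast at hnext
    linarith
  · rwa [hkN]

lemma Ioo_subset_biUnion_langlieWindow {ε : ℝ} {n : ℕ} (hεn : 1 < 2 ^ n * (2 * ε)) {y : ℝ}
    (hy : y ∈ Icc (0 : ℝ) 1) :
    Ioo (1 / 2 ^ n) (1 - 1 / 2 ^ n) ⊆ ⋃ k < 2 ^ n, langlieWindow ε n k y := by
  have h2n : (0 : ℝ) < 2 ^ n := by positivity
  have hdL : (1 - 2 * ε) / 2 ^ n < 2 * ε * (1 - 1 / 2 ^ n) := by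
    rw [div_lt_iff₀ h2n]; field_simp; linarith
  have hcast : ((2 ^ n - 1 : ℕ) : ℝ) = 2 ^ n - 1 := by
    rw [Nat.cast_sub Nat.one_le_two_pow]; push_cast; ring
  have hsub : Ioo (1 / 2 ^ n) (1 - 1 / 2 ^ n) ⊆ Ioo (y / 2 ^ n)
      (y / 2 ^ n + ((2 ^ n - 1 : ℕ) : ℝ) * ((1 - 2 * ε) / 2 ^ n) + 2 * ε * (1 - 1 / 2 ^ n)) := by
    refine Ioo_subset_Ioo (div_le_div_of_nonneg_right hy.2 h2n.le) ?_
    rw [hcast]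
    field_simp
    linarith [hy.1]
  intro u hu
  obtain ⟨k, hk, hwin⟩ := mem_iUnion₂.1 (Ioo_subset_biUnion_Ioo_add_mul hdL _ (hsub hu))
  exact mem_iUnion₂.2 ⟨k, by have := @Nat.one_le_two_pow n; omega, hwin⟩

lemma exists_measure_inter_langlieWindow_pos {ε : ℝ} {n : ℕ} (hεn : 1 < 2 ^ n * (2 * ε))
    {y : ℝ} (hy : y ∈ Icc (0 : ℝ) 1) {A : Set ℝ}
    (hA : 0 < volume (A ∩ Ioo (1 / 2 ^ n) (1 - 1 / 2 ^ n))) :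
    ∃ k < 2 ^ n, 0 < volume (A ∩ langlieWindow ε n k y) := by
  have hAW : 0 < volume (⋃ k, ⋃ _ : k < 2 ^ n, A ∩ langlieWindow ε n k y) := by
    rw [← inter_iUnion₂]
    exact hA.trans_le (measure_mono (inter_subset_inter_right A
      (Ioo_subset_biUnion_langlieWindow hεn hy)))
  obtain ⟨k, hkA⟩ := exists_measure_pos_of_not_measure_iUnion_null hAW.ne'
  obtain ⟨hk, hkA⟩ := exists_measure_pos_of_not_measure_iUnion_null hkA.ne'
  exact ⟨k, hk, hkA⟩

lemma eventually_measure_inter_Ioo_pos {A : Set ℝ} (hA : A ⊆ Icc 0 1) (hApos : 0 < volume A) :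
    ∀ᶠ n : ℕ in atTop, 0 < volume (A ∩ Ioo (1 / 2 ^ n) (1 - 1 / 2 ^ n)) := by
  have hmono : Monotone fun n : ℕ => A ∩ Ioo (1 / (2 : ℝ) ^ n) (1 - 1 / 2 ^ n) := by
    intro m n hmn
    have : 1 / (2 : ℝ) ^ n ≤ 1 / 2 ^ m := by gcongr; norm_num
    exact inter_subset_inter_right _ (Ioo_subset_Ioo this (by linarith))
  have hcover : A ∩ Ioo 0 1 ⊆ ⋃ n : ℕ, A ∩ Ioo (1 / (2 : ℝ) ^ n) (1 - 1 / 2 ^ n) := by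
    rintro u ⟨huA, hu₀, hu₁⟩
    obtain ⟨n, hn⟩ := exists_pow_lt_of_lt_one (lt_min hu₀ (sub_pos.2 hu₁)) one_half_lt_one
    rw [one_div_pow] at hn
    exact mem_iUnion.2 ⟨n, huA, by linarith [min_le_left u (1 - u)],
      by linarith [min_le_right u (1 - u)]⟩
  have hA01 : volume (A ∩ Ioo 0 1) = volume A := by
    rw [measure_congr (EventuallyEq.rfl.inter Ioo_ae_eq_Icc), inter_eq_left.2 hA]
  exact (tendsto_measure_iUnion_atTop hmono).eventually_const_lt
    (hApos.trans_le (hA01 ▸ measure_mono hcover))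

/-- The Markovian Langlie chain is irreducible w.r.t. Lebesgue measure on `[0,1]`:
for every `x ∈ [0,1]` and every Borel `A ⊆ [0,1]` of positive Lebesgue measure there
is `n ≥ 1` with `kⁿ(x, A) > 0`. -/
theorem stmt_10 (H : ℝ → ℝ) (ε : ℝ) (hε : 0 < ε) (hε' : ε < 1 / 2)
    (hHcont : ContinuousOn H (Set.Icc 0 1))
    (hH01 : ∀ x ∈ Set.Icc (0 : ℝ) 1, H x ∈ Set.Ioo (0 : ℝ) 1) :
    ∀ x ∈ Set.Icc (0 : ℝ) 1, ∀ A : Set ℝ, A ⊆ Set.Icc (0 : ℝ) 1 → MeasurableSet A →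
      0 < volume A → ∃ n : ℕ, 1 ≤ n ∧ 0 < langlieIter H ε n x A := by
  intro x hx A hA01 _ hApos
  -- `Measure.bind` silently returns `0` for non-measurable kernels, so we pass to a globally
  -- continuous `H'`, which yields the same chain from points of `[0,1]`
  set H' : ℝ → ℝ := fun t => H (projIcc 0 1 zero_le_one t)
  have hHH' : EqOn H H' (Icc 0 1) := fun t ht => by simp [H', projIcc_of_mem _ ht]
  have hH'm : Measurable H' := (hHcont.comp_continuous (continuous_subtype_val.comp
    continuous_projIcc) fun t => (projIcc 0 1 zero_le_one t).2).measurable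
  have hεn : ∀ᶠ n : ℕ in atTop, 1 < 2 ^ n * (2 * ε) :=
    ((tendsto_pow_atTop_atTop_of_one_lt one_lt_two).atTop_mul_const
      (by positivity)).eventually_gt_atTop 1
  obtain ⟨n, hn, hεn, hAn⟩ :=
    ((eventually_ge_atTop 1).and (hεn.and (eventually_measure_inter_Ioo_pos hA01 hApos))).exists
  obtain ⟨k, hk, hkA⟩ := exists_measure_inter_langlieWindow_pos hεn hx hAn
  refine ⟨n, hn, ?_⟩
  rw [langlieIter_congr hε'.le hHH' n hx]
  refine (restrict_langlieWindow_absolutelyContinuous hH'm (fun y hy => hHH' hy ▸ hH01 y hy)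
    hε hε'.le hn hk hx).pos_mono ?_
  rwa [Measure.restrict_apply' (measurableSet_langlieWindow ε n k x)]
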